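/- Let K be a local field containing 𝔽_p with residue field k of size p^d, and let R = k[τ] be the twisted polynomial ring acting on K via k-scalar multiplication and τ acting as the p-th power map. Then the left R-module K/O_K is free, with basis given by the residue classes [ξ_j] of any fixed elements ξ_j ∈ K of normalized valuation -j, for all integers j > 0 not divisible by p. -/

import Mathlib

/-!
As a `k`-vector space `R` has basis `τ^i`, so the claim is that the `τ^i ξ_j = ξ_j ^ p^i` form a
`k`-basis of `K / O_K`. Now `ξ_j ^ p^i` has a pole of order exactly `j p^i`, and `(j, i) ↦ j p^i`
is a bijection from `{j > 0 | p ∤ j} × ℕ` onto the positive integers. Laurent series with one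
pole order for each positive integer form a `k`-basis of `K / O_K`: existence by subtracting
multiples of them to remove the principal part from its deepest pole upwards, uniqueness because
in a nonzero combination the term with the deepest pole cannot cancel.
-/

/-- Action of the twisted polynomial `∑ qᵢ τ^i` on `ξ`. -/
noncomputable def twistedPolyAct (p : ℕ) {k : Type*} [Field k]
    (q : Polynomial k) (ξ : LaurentSeries k) : LaurentSeries k :=
  ∑ i ∈ Finset.range (q.natDegree + 1), HahnSeries.C (q.coeff i) * ξ ^ (p ^ i)

open Polynomial

lemma Nat.eq_and_eq_of_mul_prime_pow_eq {p a b i j : ℕ} (hp : p.Prime) (ha : ¬p ∣ a)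
    (hb : ¬p ∣ b) (h : a * p ^ i = b * p ^ j) : a = b ∧ i = j := by
  have hval {c n : ℕ} (hc : ¬p ∣ c) : (c * p ^ n).factorization p = n := by
    rw [Nat.factorization_mul (by rintro rfl; exact hc (dvd_zero p)) (pow_ne_zero _ hp.ne_zero),
      hp.factorization_pow, Finsupp.add_apply, Nat.factorization_eq_zero_of_not_dvd hc]
    simp
  obtain rfl : i = j := by rw [← hval (n := i) ha, ← hval (n := j) hb, h]
  exact ⟨Nat.eq_of_mul_eq_mul_right (pow_pos hp.pos _) h, rfl⟩

lemma Nat.exists_not_dvd_mul_pow_eq {p n : ℕ} (hp : p ≠ 1) (hn : n ≠ 0) :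
    ∃ a i : ℕ, ¬p ∣ a ∧ a * p ^ i = n := by
  obtain ⟨i, a, ha, rfl⟩ := Nat.exists_eq_pow_mul_and_not_dvd hn p hp
  exact ⟨a, i, ha, mul_comm _ _⟩

lemma HahnSeries.orderTop_pow {Γ R : Type*} [AddCommMonoid Γ] [LinearOrder Γ]
    [IsOrderedCancelAddMonoid Γ] [Semiring R] [Nontrivial R] [NoZeroDivisors R]
    (x : HahnSeries Γ R) (n : ℕ) : (x ^ n).orderTop = n • x.orderTop := by
  induction n with
  | zero => simp
  | succ n ih => rw [pow_succ, orderTop_mul, ih, succ_nsmul]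

/-- `c ↦ ((a, i) ↦ (c a).coeff i)`. -/
noncomputable def Finsupp.polynomialEquiv (α R : Type*) [Semiring R] :
    (α →₀ R[X]) ≃ (α × ℕ →₀ R) :=
  (Finsupp.mapRange.addEquiv
    ((toFinsuppIso R).toAddEquiv.trans AddMonoidAlgebra.coeffAddEquiv)).toEquiv.trans
    Finsupp.curryEquiv.symm

lemma Finsupp.linearCombination_polynomialEquiv {α R M : Type*} [Semiring R] [AddCommMonoid M]
    [Module R M] (v : α × ℕ → M) (c : α →₀ R[X]) :
    Finsupp.linearCombination R v (Finsupp.polynomialEquiv α R c) =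
      c.sum fun a q => q.sum fun i b => b • v (a, i) := by
  rw [Finsupp.linearCombination_apply, Finsupp.polynomialEquiv]
  simp only [Equiv.trans_apply, AddEquiv.toEquiv_eq_coe, EquivLike.coe_coe,
    Finsupp.curryEquiv_symm_apply, Finsupp.mapRange.addEquiv_apply]
  rw [Finsupp.sum_uncurry_index, Finsupp.sum_mapRange_index (by simp)]
  refine Finsupp.sum_congr fun a _ => ?_
  simp [Polynomial.sum_def, Finsupp.sum, support_toFinsupp, toFinsupp_apply]

lemma twistedPolyAct_eq_sum (p : ℕ) {k : Type*} [Field k] (q : k[X]) (x : LaurentSeries k) :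
    twistedPolyAct p q x = q.sum fun i b => b • x ^ p ^ i := by
  rw [Polynomial.sum_over_range (f := fun i b => b • x ^ p ^ i) q fun n => zero_smul _ _]
  simp [twistedPolyAct]

namespace LaurentSeries

variable {k ι : Type*} [Field k] {e : ι → LaurentSeries k} {pole : ι → ℕ}

lemma eq_zero_of_orderTop_linearCombination_nonneg
    (he : ∀ i, (e i).orderTop = ((-pole i : ℤ) : WithTop ℤ)) (hpos : ∀ i, 0 < pole i)
    (hinj : Function.Injective pole) {a : ι →₀ k}
    (ha : 0 ≤ (Finsupp.linearCombination k e a).orderTop) : a = 0 := by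
  by_contra ha0
  obtain ⟨i₀, hi₀, hmax⟩ :=
    a.support.exists_max_image pole (Finsupp.support_nonempty_iff.mpr ha0)
  have hcoeff : (Finsupp.linearCombination k e a).coeff (-pole i₀) =
      a i₀ * (e i₀).coeff (-pole i₀) := by
    rw [Finsupp.linearCombination_apply, Finsupp.sum, HahnSeries.coeff_sum,
      Finset.sum_eq_single_of_mem i₀ hi₀]
    · simp
    intro i hi hne
    have hlt : pole i < pole i₀ := (hmax i hi).lt_of_ne (hinj.ne hne)
    have : (e i).coeff (-pole i₀) = 0 := HahnSeries.coeff_eq_zero_of_lt_orderTop <| by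
      rw [he]; exact_mod_cast neg_lt_neg (Int.ofNat_lt.mpr hlt)
    simp [this]
  refine mul_ne_zero (Finsupp.mem_support_iff.mp hi₀) (HahnSeries.coeff_orderTop_ne (he i₀))
    (hcoeff ▸ HahnSeries.coeff_eq_zero_of_lt_orderTop (lt_of_lt_of_le ?_ ha))
  exact_mod_cast neg_neg_of_pos (Int.natCast_pos.mpr (hpos i₀))

lemma exists_orderTop_sub_linearCombination_nonneg
    (he : ∀ i, (e i).orderTop = ((-pole i : ℤ) : WithTop ℤ))
    (hsurj : ∀ n, 0 < n → ∃ i, pole i = n) (m : LaurentSeries k) :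
    ∃ a : ι →₀ k, 0 ≤ (m - Finsupp.linearCombination k e a).orderTop := by
  suffices h : ∀ n : ℕ, ∀ m : LaurentSeries k, ((-n : ℤ) : WithTop ℤ) ≤ m.orderTop →
      ∃ a : ι →₀ k, 0 ≤ (m - Finsupp.linearCombination k e a).orderTop by
    refine h m.order.natAbs m ?_
    rcases eq_or_ne m 0 with rfl | hm
    · simp
    rw [← HahnSeries.order_eq_orderTop_of_ne_zero hm, WithTop.coe_le_coe]
    omega
  intro n
  induction n with
  | zero => exact fun m hm => ⟨0, by simpa using hm⟩
  | succ n ih =>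
    intro m hm
    obtain ⟨i, hi⟩ := hsurj (n + 1) n.succ_pos
    set b := m.coeff (-pole i) / (e i).coeff (-pole i)
    have hm' : ((-n : ℤ) : WithTop ℤ) ≤ (m - b • e i).orderTop := by
      rw [HahnSeries.le_orderTop_iff_forall]
      intro g hg
      have hg : g ≤ -pole i := by
        have : g < -n := by exact_mod_cast hg
        omega
      rw [HahnSeries.coeff_sub, HahnSeries.coeff_smul, smul_eq_mul]
      rcases hg.lt_or_eq with hlt | rfl
      · rw [HahnSeries.coeff_eq_zero_of_lt_orderTop, HahnSeries.coeff_eq_zero_of_lt_orderTop,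
          mul_zero, sub_zero]
        · rw [he]; exact_mod_cast hlt
        · refine lt_of_lt_of_le ?_ hm
          rw [← hi]; exact_mod_cast hlt
      · rw [div_mul_cancel₀ _ (HahnSeries.coeff_orderTop_ne (he i)), sub_self]
    obtain ⟨a, ha⟩ := ih _ hm'
    refine ⟨a + Finsupp.single i b, ?_⟩
    rwa [map_add, Finsupp.linearCombination_single, sub_add_eq_sub_sub_swap]

lemma existsUnique_orderTop_sub_linearCombination_nonneg
    (he : ∀ i, (e i).orderTop = ((-pole i : ℤ) : WithTop ℤ)) (hpos : ∀ i, 0 < pole i)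
    (hinj : Function.Injective pole) (hsurj : ∀ n, 0 < n → ∃ i, pole i = n)
    (m : LaurentSeries k) :
    ∃! a : ι →₀ k, 0 ≤ (m - Finsupp.linearCombination k e a).orderTop := by
  obtain ⟨a, ha⟩ := exists_orderTop_sub_linearCombination_nonneg he hsurj m
  refine ⟨a, ha, fun a' ha' => sub_eq_zero.mp ?_⟩
  refine eq_zero_of_orderTop_linearCombination_nonneg he hpos hinj ?_
  have hdiff : Finsupp.linearCombination k e (a' - a) =
      (m - Finsupp.linearCombination k e a) - (m - Finsupp.linearCombination k e a') := by
    rw [map_sub]; abel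
  exact hdiff ▸ (le_min ha ha').trans HahnSeries.min_orderTop_le_orderTop_sub

end LaurentSeries

theorem quotient_free_over_twisted_polynomials_general
    (p : ℕ) [Fact p.Prime] (k : Type*) [Field k]
    (ξ : {j : ℕ // 0 < j ∧ ¬ p ∣ j} → LaurentSeries k)
    (hξ : ∀ j, (ξ j).orderTop = ((-(j.1 : ℤ) : ℤ) : WithTop ℤ)) :
    ∀ m : LaurentSeries k,
      ∃! c : {j : ℕ // 0 < j ∧ ¬ p ∣ j} →₀ Polynomial k,
        0 ≤ (m - c.sum fun j q => twistedPolyAct p q (ξ j)).orderTop := by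
  intro m
  have hp : p.Prime := Fact.out
  refine ((Finsupp.polynomialEquiv _ k).existsUnique_congr fun c => ?_).mpr
    (LaurentSeries.existsUnique_orderTop_sub_linearCombination_nonneg
      (e := fun x => ξ x.1 ^ p ^ x.2) (pole := fun x => x.1.1 * p ^ x.2) ?_ ?_ ?_ ?_ m)
  · simp only [Finsupp.linearCombination_polynomialEquiv, twistedPolyAct_eq_sum]
  · intro x
    rw [HahnSeries.orderTop_pow, hξ, ← WithTop.coe_nsmul, WithTop.coe_inj, nsmul_eq_mul]
    push_cast
    ring
  · exact fun x => Nat.mul_pos x.1.2.1 (pow_pos hp.pos _)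
  · rintro ⟨j, i⟩ ⟨j', i'⟩ h
    obtain ⟨hj, rfl⟩ := Nat.eq_and_eq_of_mul_prime_pow_eq hp j.2.2 j'.2.2 h
    rw [Subtype.ext hj]
  · intro n hn
    obtain ⟨a, i, ha, rfl⟩ := Nat.exists_not_dvd_mul_pow_eq hp.ne_one hn.ne'
    exact ⟨(⟨a, Nat.pos_of_mul_pos_right hn, ha⟩, i), rfl⟩

theorem quotient_free_over_twisted_polynomials
    (p : ℕ) [Fact p.Prime] (k : Type*) [Field k] [Fintype k] [CharP k p] (d : ℕ)
    (hk : Fintype.card k = p ^ d)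
    (ξ : {j : ℕ // 0 < j ∧ ¬ p ∣ j} → LaurentSeries k)
    (hξ : ∀ j, (ξ j).orderTop = ((-(j.1 : ℤ) : ℤ) : WithTop ℤ)) :
    ∀ m : LaurentSeries k,
      ∃! c : {j : ℕ // 0 < j ∧ ¬ p ∣ j} →₀ Polynomial k,
        0 ≤ (m - c.sum fun j q => twistedPolyAct p q (ξ j)).orderTop :=
  quotient_free_over_twisted_polynomials_general p k ξ hξ
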